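/- arXiv:math/0702470 — 5 statements merged into one kernel-verified Lean document; each statement's English description precedes it below -/
import Mathlib

section
/- Let R be a commutative ring equipped with a derivation δ (an additive map δ : R → R satisfying δ(ab) = a·δ(b) + b·δ(a)), let I be a differential ideal of R (an ideal with δ(I) ⊆ I), and let H and K be subsets of R. If for every k ∈ K there exist elements h₁ and h₂ of the multiplicative monoid generated by H such that k·h₁ − h₂ ∈ I, then I : H^∞ = I : (H ∪ K)^∞. -/
/-- Let `R` be a commutative ring equipped with a derivation `δ`
(an additive map satisfying the Leibniz rule), let `I` be a differential ideal of `R`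
(`δ I ⊆ I`), and let `H`, `K` be subsets of `R`. If for every `k ∈ K` there exist
`h₁, h₂` in the multiplicative monoid generated by `H` with `k * h₁ - h₂ ∈ I`, then
`I : H^∞ = I : (H ∪ K)^∞`, where `I : S^∞ = {a | s * a ∈ I for some s in the monoid
generated by S}`. -/
theorem saturation_union_eq_of_differential
    {R : Type*} [CommRing R] (δ : R → R)
    (hδadd : ∀ a b : R, δ (a + b) = δ a + δ b)
    (hδmul : ∀ a b : R, δ (a * b) = a * δ b + b * δ a)
    (I : Ideal R) (hI : ∀ x ∈ I, δ x ∈ I)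
    (H K : Set R)
    (hK : ∀ k ∈ K, ∃ h₁ ∈ Submonoid.closure H, ∃ h₂ ∈ Submonoid.closure H,
      k * h₁ - h₂ ∈ I) :
    {a : R | ∃ s ∈ Submonoid.closure H, s * a ∈ I} =
      {a : R | ∃ s ∈ Submonoid.closure (H ∪ K), s * a ∈ I} := by
  have key : ∀ s ∈ Submonoid.closure (H ∪ K), ∀ a : R, s * a ∈ I →
      ∃ h ∈ Submonoid.closure H, h * a ∈ I := by
    intro s hs
    induction hs using Submonoid.closure_induction with
    | mem x hx =>
      intro a ha
      rcases hx with hx | hx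
      · exact ⟨x, Submonoid.subset_closure hx, ha⟩
      · obtain ⟨h₁, hh₁, h₂, hh₂, hxk⟩ := hK x hx
        refine ⟨h₂, hh₂, ?_⟩
        have : (x * h₁ - h₂) * a ∈ I := I.mul_mem_right a hxk
        have h2 : h₁ * (x * a) ∈ I := I.mul_mem_left h₁ ha
        have := I.sub_mem h2 this
        have heq : h₁ * (x * a) - (x * h₁ - h₂) * a = h₂ * a := by ring
        rwa [heq] at this
    | one =>
      intro a ha
      exact ⟨1, Submonoid.one_mem _, ha⟩
    | mul x y hx hy ihx ihy =>
      intro a ha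
      have h1 : x * (y * a) ∈ I := by rwa [← mul_assoc]
      obtain ⟨hx', hx'mem, hx'I⟩ := ihx (y * a) h1
      have h2 : y * (hx' * a) ∈ I := by
        have : hx' * (y * a) = y * (hx' * a) := by ring
        rwa [this] at hx'I
      obtain ⟨hy', hy'mem, hy'I⟩ := ihy (hx' * a) h2
      refine ⟨hy' * hx', Submonoid.mul_mem _ hy'mem hx'mem, ?_⟩
      rwa [mul_assoc]
  ext a
  simp only [Set.mem_setOf_eq]
  constructor
  · rintro ⟨s, hs, hsa⟩
    exact ⟨s, Submonoid.closure_mono Set.subset_union_left hs, hsa⟩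
  · rintro ⟨s, hs, hsa⟩
    exact key s hs a hsa
end

section
/- Let R be a commutative ring, S a submonoid of R, I an ideal of R, and write Ī = I : S^∞ for the saturation of I by S (which is again an ideal of R). Let h ∈ S, g₀ ∈ R, and p ∈ R[X], and let C : R → R[X] be the constant-polynomial embedding. If h·p − C(g₀) lies in the ideal of R[X] generated by C(Ī), then every coefficient of p of positive index lies in Ī; equivalently, p − C(c₀) lies in the ideal of R[X] generated by C(Ī), where c₀ is the constant coefficient of p. -/
open Polynomial

/-- Let `R` be a commutative ring, `S` a submonoid of `R`, `I` an
ideal, and `Ī = I : S^∞ = {a | s * a ∈ I for some s ∈ S}` the saturation of `I` by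
`S`. Let `h ∈ S`, `g₀ ∈ R`, `p ∈ R[X]`, and `C : R → R[X]` the constant-polynomial
embedding. If `h·p − C g₀` lies in the ideal of `R[X]` generated by `C(Ī)`, then
every coefficient of `p` of positive index lies in `Ī`; equivalently,
`p − C(c₀)` lies in the ideal generated by `C(Ī)`, where `c₀` is the constant
coefficient of `p`. -/
theorem coeffs_mem_saturation_of_smul_sub_const_mem
    {R : Type*} [CommRing R] (S : Submonoid R) (I : Ideal R)
    (Isat : Set R) (hIsat : Isat = {a : R | ∃ s ∈ S, s * a ∈ I})
    (h : R) (hh : h ∈ S) (g₀ : R) (p : R[X])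
    (hp : C h * p - C g₀ ∈ Ideal.span ((Polynomial.C : R →+* R[X]) '' Isat)) :
    (∀ i : ℕ, 0 < i → p.coeff i ∈ Isat) ∧
      p - C (p.coeff 0) ∈ Ideal.span ((Polynomial.C : R →+* R[X]) '' Isat) := by
  subst hIsat
  -- The saturation is an ideal of `R`.
  set J : Ideal R :=
    { carrier := {a : R | ∃ s ∈ S, s * a ∈ I}
      zero_mem' := ⟨1, S.one_mem, by simp⟩
      add_mem' := by
        rintro a b ⟨s, hs, hsa⟩ ⟨t, ht, htb⟩
        refine ⟨s * t, S.mul_mem hs ht, ?_⟩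
        have : s * t * (a + b) = t * (s * a) + s * (t * b) := by ring
        rw [this]
        exact I.add_mem (I.mul_mem_left _ hsa) (I.mul_mem_left _ htb)
      smul_mem' := by
        rintro c a ⟨s, hs, hsa⟩
        refine ⟨s, hs, ?_⟩
        have : s * (c • a) = c * (s * a) := by simp [smul_eq_mul]; ring
        rw [this]
        exact I.mul_mem_left _ hsa } with hJ
  have hspan : Ideal.span ((Polynomial.C : R →+* R[X]) '' {a : R | ∃ s ∈ S, s * a ∈ I})
      = Ideal.map (Polynomial.C : R →+* R[X]) J := rfl
  rw [hspan] at hp ⊢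
  have hcoeff : ∀ n : ℕ, (C h * p - C g₀).coeff n ∈ J :=
    Ideal.mem_map_C_iff.mp hp
  have key : ∀ i : ℕ, 0 < i → p.coeff i ∈ J := by
    intro i hi
    have := hcoeff i
    rw [coeff_sub, coeff_C, if_neg hi.ne', sub_zero, coeff_C_mul] at this
    obtain ⟨s, hs, hsa⟩ := this
    exact ⟨s * h, S.mul_mem hs hh, by rwa [mul_assoc]⟩
  refine ⟨key, ?_⟩
  rw [Ideal.mem_map_C_iff]
  intro n
  rcases Nat.eq_zero_or_pos n with rfl | hn
  · simp
  · rw [coeff_sub, coeff_C, if_neg hn.ne', sub_zero]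
    exact key n hn
end

section
/- Let Y be a finite set with n elements, let m : Y → ℕ, let Z ⊆ Y be a subset with |Z| = l, and let z ∈ Y \ Z. For a subset W ⊆ Y with |W| = k, define M_W(m) = (n − k)·Σ_{y∈W} m(y) + Σ_{y∈Y∖W} m(y). If l + 1 < n, then M_{Z∪{z}}(m) ≤ (n − l − 1)·M_Z(m). -/
/-- Let `Y` be a finite set with `n` elements, `m : Y → ℕ`,
`Z ⊆ Y` with `|Z| = l`, and `z ∈ Y \ Z`. For `W ⊆ Y` with `|W| = k` set
`M_W(m) = (n − k)·Σ_{y∈W} m y + Σ_{y∈Y∖W} m y`. If `l + 1 < n`, then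
`M_{Z∪{z}}(m) ≤ (n − l − 1)·M_Z(m)`. -/
theorem weighted_order_sum_insert_le
    {α : Type*} [DecidableEq α] (Y : Finset α) (n : ℕ) (hY : Y.card = n)
    (m : α → ℕ) (Z : Finset α) (hZY : Z ⊆ Y) (l : ℕ) (hZ : Z.card = l)
    (z : α) (hz : z ∈ Y \ Z) (hln : l + 1 < n) :
    (n - (insert z Z).card) * ∑ y ∈ insert z Z, m y + ∑ y ∈ Y \ insert z Z, m y ≤
      (n - l - 1) * ((n - l) * ∑ y ∈ Z, m y + ∑ y ∈ Y \ Z, m y) := by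
  rw [Finset.mem_sdiff] at hz
  obtain ⟨hzY, hzZ⟩ := hz
  have hins : (insert z Z).card = l + 1 := by rw [Finset.card_insert_of_notMem hzZ, hZ]
  have hsd : Y \ insert z Z = (Y \ Z).erase z := by
    ext x
    simp [Finset.mem_sdiff, Finset.mem_erase, Finset.mem_insert]
    tauto
  have hzmem : z ∈ Y \ Z := Finset.mem_sdiff.mpr ⟨hzY, hzZ⟩
  have hsum : ∑ y ∈ Y \ Z, m y = m z + ∑ y ∈ (Y \ Z).erase z, m y :=
    (Finset.add_sum_erase _ _ hzmem).symm
  rw [hins, hsd, Finset.sum_insert hzZ, hsum]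
  set S := ∑ y ∈ Z, m y
  set T := ∑ y ∈ (Y \ Z).erase z, m y
  obtain ⟨d, hd⟩ : ∃ d, n - l = d + 2 := ⟨n - l - 2, by omega⟩
  have h1 : n - (l + 1) = d + 1 := by omega
  have h2 : n - l - 1 = d + 1 := by omega
  rw [h1, h2, hd]
  calc (d + 1) * (m z + S) + T
      ≤ (d + 1) * (m z + (d + 2) * S) + (d + 1) * T := by
        gcongr
        · exact Nat.le_mul_of_pos_left S (by omega)
        · exact Nat.le_mul_of_pos_left T (by omega)
    _ = (d + 1) * ((d + 2) * S + (m z + T)) := by ring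
end

section
/- Let R be a commutative ring equipped with a derivation δ, let S be a submonoid of R, and let A, B, G be subsets of R. If B ⊆ {A} and A ⊆ {B} : S^∞, then {G ∪ A} : S^∞ = {G ∪ B} : S^∞. -/
/-- The smallest radical differential ideal `{F}` containing `F`: the intersection
of all radical ideals `J` of `R` that are stable under the derivation `δ` and
contain `F`. -/
def radDiffIdealGen {R : Type*} [CommRing R] (δ : R → R) (F : Set R) : Set R :=
  ⋂ J ∈ {J : Ideal R | J.IsRadical ∧ (∀ x ∈ J, δ x ∈ J) ∧ F ⊆ (J : Set R)},
    (J : Set R)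

lemma mem_radDiffIdealGen {R : Type*} [CommRing R] {δ : R → R} {F : Set R} {x : R} :
    x ∈ radDiffIdealGen δ F ↔
      ∀ J : Ideal R, J.IsRadical → (∀ y ∈ J, δ y ∈ J) → F ⊆ (J : Set R) → x ∈ J := by
  simp [radDiffIdealGen]

lemma radDiffIdealGen_le {R : Type*} [CommRing R] {δ : R → R} {F : Set R} {J : Ideal R}
    (h1 : J.IsRadical) (h2 : ∀ y ∈ J, δ y ∈ J) (h3 : F ⊆ (J : Set R)) :
    radDiffIdealGen δ F ⊆ (J : Set R) :=
  fun _ hx => mem_radDiffIdealGen.mp hx J h1 h2 h3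

lemma subset_radDiffIdealGen {R : Type*} [CommRing R] {δ : R → R} {F : Set R} :
    F ⊆ radDiffIdealGen δ F :=
  fun _ hx => mem_radDiffIdealGen.mpr fun _ _ _ h3 => h3 hx

lemma radDiffIdealGen_mono {R : Type*} [CommRing R] {δ : R → R} {F G : Set R}
    (h : F ⊆ G) : radDiffIdealGen δ F ⊆ radDiffIdealGen δ G :=
  fun _ hx => mem_radDiffIdealGen.mpr fun J h1 h2 h3 =>
    mem_radDiffIdealGen.mp hx J h1 h2 (h.trans h3)

/-- Let `R` be a commutative ring with a derivation `δ`, `S` a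
submonoid of `R`, and `A`, `B`, `G` subsets of `R`. If `B ⊆ {A}` and
`A ⊆ {B} : S^∞`, then `{G ∪ A} : S^∞ = {G ∪ B} : S^∞`, where `{F}` is the smallest
radical differential ideal containing `F` and `T : S^∞ = {a | s * a ∈ T for some
s ∈ S}`. -/
theorem radDiffIdeal_saturation_union_eq
    {R : Type*} [CommRing R] (δ : R → R)
    (hδadd : ∀ a b : R, δ (a + b) = δ a + δ b)
    (hδmul : ∀ a b : R, δ (a * b) = a * δ b + b * δ a)
    (S : Submonoid R) (A B G : Set R)
    (hBA : B ⊆ radDiffIdealGen δ A)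
    (hAB : A ⊆ {a : R | ∃ s ∈ S, s * a ∈ radDiffIdealGen δ B}) :
    {a : R | ∃ s ∈ S, s * a ∈ radDiffIdealGen δ (G ∪ A)} =
      {a : R | ∃ s ∈ S, s * a ∈ radDiffIdealGen δ (G ∪ B)} := by
  -- First: {G ∪ B} ⊆ {G ∪ A}
  have hGB_le : radDiffIdealGen δ (G ∪ B) ⊆ radDiffIdealGen δ (G ∪ A) := by
    intro x hx
    rw [mem_radDiffIdealGen] at hx ⊢
    intro J h1 h2 h3
    refine hx J h1 h2 ?_
    rintro y (hy | hy)
    · exact h3 (Or.inl hy)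
    · exact radDiffIdealGen_le h1 h2 (fun z hz => h3 (Or.inr hz)) (hBA hy)
  -- The saturation of {G ∪ B} is an ideal
  set J : Set R := radDiffIdealGen δ (G ∪ B) with hJ
  have hJid : ∀ (P : Ideal R → Prop),
      (∀ K : Ideal R, K.IsRadical → (∀ y ∈ K, δ y ∈ K) → (G ∪ B) ⊆ (K : Set R) → P K) →
      True := fun _ _ => trivial
  -- basic closure properties of J
  have key : ∀ {x : R} (h : ∀ K : Ideal R, K.IsRadical → (∀ y ∈ K, δ y ∈ K) →
      (G ∪ B) ⊆ (K : Set R) → x ∈ K), x ∈ J := fun h => mem_radDiffIdealGen.mpr h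
  have hzero : (0 : R) ∈ J := key fun K _ _ _ => K.zero_mem
  have hadd : ∀ {x y : R}, x ∈ J → y ∈ J → x + y ∈ J := by
    intro x y hx hy
    exact key fun K h1 h2 h3 =>
      K.add_mem (mem_radDiffIdealGen.mp hx K h1 h2 h3) (mem_radDiffIdealGen.mp hy K h1 h2 h3)
  have hmul : ∀ (r : R) {x : R}, x ∈ J → r * x ∈ J := by
    intro r x hx
    exact key fun K h1 h2 h3 => K.mul_mem_left r (mem_radDiffIdealGen.mp hx K h1 h2 h3)
  have hrad : ∀ {x : R} (n : ℕ), x ^ n ∈ J → x ∈ J := by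
    intro x n hx
    exact key fun K h1 h2 h3 => h1 ⟨n, mem_radDiffIdealGen.mp hx K h1 h2 h3⟩
  have hdel : ∀ {x : R}, x ∈ J → δ x ∈ J := by
    intro x hx
    exact key fun K h1 h2 h3 => h2 x (mem_radDiffIdealGen.mp hx K h1 h2 h3)
  -- the saturation as an ideal
  set T : Ideal R :=
    { carrier := {a : R | ∃ s ∈ S, s * a ∈ J}
      zero_mem' := ⟨1, S.one_mem, by simpa using hzero⟩
      add_mem' := by
        rintro a b ⟨s, hs, hsa⟩ ⟨t, ht, htb⟩
        refine ⟨s * t, S.mul_mem hs ht, ?_⟩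
        have : s * t * (a + b) = t * (s * a) + s * (t * b) := by ring
        rw [this]
        exact hadd (hmul t hsa) (hmul s htb)
      smul_mem' := by
        rintro r a ⟨s, hs, hsa⟩
        refine ⟨s, hs, ?_⟩
        have : s * (r • a) = r * (s * a) := by rw [smul_eq_mul]; ring
        rw [this]
        exact hmul r hsa } with hT
  have hTrad : T.IsRadical := by
    rintro a ⟨n, s, hs, hsa⟩
    rcases n with _ | m
    · simp only [pow_zero, mul_one] at hsa
      exact ⟨s, hs, by rw [show s * a = a * s by ring]; exact hmul a hsa⟩
    · refine ⟨s, hs, hrad (m + 1) ?_⟩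
      have h2 : (s * a) ^ (m + 1) = s ^ m * (s * a ^ (m + 1)) := by ring
      rw [h2]
      exact hmul _ hsa
  have hTdiff : ∀ y ∈ T, δ y ∈ T := by
    rintro a ⟨s, hs, hsa⟩
    refine ⟨s * s, S.mul_mem hs hs, ?_⟩
    -- s * δ(s*a) = s*(s*δa + a*δs) so s*s*δa = s*δ(s*a) - (s*a)*δs
    have h1 : δ (s * a) ∈ J := hdel hsa
    have h2 : s * s * δ a = s * δ (s * a) + (-(δ s)) * (s * a) := by
      rw [hδmul]; ring
    rw [h2]
    exact hadd (hmul s h1) (hmul _ hsa)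
  have hTcont : (G ∪ A) ⊆ (T : Set R) := by
    rintro x (hx | hx)
    · exact ⟨1, S.one_mem, by simpa using subset_radDiffIdealGen (δ := δ) (F := G ∪ B) (Or.inl hx)⟩
    · obtain ⟨s, hs, hsx⟩ := hAB hx
      exact ⟨s, hs, radDiffIdealGen_mono Set.subset_union_right hsx⟩
  have hGA_le : radDiffIdealGen δ (G ∪ A) ⊆ (T : Set R) :=
    radDiffIdealGen_le hTrad hTdiff hTcont
  ext a
  constructor
  · rintro ⟨s, hs, hsa⟩
    obtain ⟨t, ht, hta⟩ := hGA_le hsa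
    exact ⟨t * s, S.mul_mem ht hs, by rwa [mul_assoc]⟩
  · rintro ⟨s, hs, hsa⟩
    exact ⟨s, hs, hGB_le hsa⟩
end

section
/- Let R be a commutative ring equipped with a derivation δ, let S be a submonoid of R, let B and G be subsets of R, and let r : G → R be a function such that for every g ∈ G there exists h ∈ S with h·g − r(g) lying in the (non-differential) ideal of R generated by B. Then {G ∪ B} : S^∞ = {r(G) ∪ B} : S^∞, where r(G) is the image of G under r. -/
section Aux

variable {R : Type*} [CommRing R]

lemma mem_gen_iff (δ : R → R) (F : Set R) (x : R) :
    x ∈ radDiffIdealGen δ F ↔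
      ∀ J : Ideal R, J.IsRadical → (∀ y ∈ J, δ y ∈ J) → F ⊆ (J : Set R) → x ∈ J := by
  simp [radDiffIdealGen, Set.mem_iInter, and_imp]

/-- `{F}` as an ideal. -/
def genIdeal (δ : R → R) (F : Set R) : Ideal R where
  carrier := radDiffIdealGen δ F
  zero_mem' := by
    rw [mem_gen_iff]; intro J _ _ _; exact J.zero_mem
  add_mem' := by
    intro a b ha hb
    rw [mem_gen_iff] at *
    intro J h1 h2 h3
    exact J.add_mem (ha J h1 h2 h3) (hb J h1 h2 h3)
  smul_mem' := by
    intro c a ha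
    rw [mem_gen_iff] at *
    intro J h1 h2 h3
    exact J.smul_mem c (ha J h1 h2 h3)

lemma subset_genIdeal (δ : R → R) (F : Set R) : F ⊆ (genIdeal δ F : Set R) := by
  intro x hx
  show x ∈ radDiffIdealGen δ F
  rw [mem_gen_iff]
  intro J _ _ h3
  exact h3 hx

lemma genIdeal_isRadical (δ : R → R) (F : Set R) : (genIdeal δ F).IsRadical := by
  intro a ha
  obtain ⟨n, hn⟩ := ha
  show a ∈ radDiffIdealGen δ F
  rw [mem_gen_iff]
  intro J h1 h2 h3
  exact h1 ⟨n, (mem_gen_iff δ F _).1 hn J h1 h2 h3⟩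

lemma genIdeal_diff (δ : R → R) (F : Set R) :
    ∀ y ∈ genIdeal δ F, δ y ∈ genIdeal δ F := by
  intro y hy
  show δ y ∈ radDiffIdealGen δ F
  rw [mem_gen_iff]
  intro J h1 h2 h3
  exact h2 y ((mem_gen_iff δ F _).1 hy J h1 h2 h3)

/-- Saturation of an ideal by a submonoid, as an ideal. -/
def satIdeal (S : Submonoid R) (I : Ideal R) : Ideal R where
  carrier := {a | ∃ s ∈ S, s * a ∈ I}
  zero_mem' := ⟨1, S.one_mem, by simp⟩
  add_mem' := by
    rintro a b ⟨s, hs, hsa⟩ ⟨t, ht, htb⟩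
    refine ⟨s * t, S.mul_mem hs ht, ?_⟩
    have : s * t * (a + b) = t * (s * a) + s * (t * b) := by ring
    rw [this]
    exact I.add_mem (I.mul_mem_left _ hsa) (I.mul_mem_left _ htb)
  smul_mem' := by
    rintro c a ⟨s, hs, hsa⟩
    refine ⟨s, hs, ?_⟩
    have : s * (c • a) = c * (s * a) := by rw [smul_eq_mul]; ring
    rw [this]
    exact I.mul_mem_left _ hsa

lemma satIdeal_isRadical (S : Submonoid R) (I : Ideal R) (hI : I.IsRadical) :
    (satIdeal S I).IsRadical := by
  rintro a ⟨n, s, hs, hsa⟩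
  refine ⟨s, hs, hI ⟨n + 1, ?_⟩⟩
  have : (s * a) ^ (n + 1) = (s ^ n * a) * (s * a ^ n) := by ring
  rw [this]
  exact I.mul_mem_left _ hsa

lemma satIdeal_diff (δ : R → R)
    (hδmul : ∀ a b : R, δ (a * b) = a * δ b + b * δ a)
    (S : Submonoid R) (I : Ideal R) (hI : ∀ y ∈ I, δ y ∈ I) :
    ∀ y ∈ satIdeal S I, δ y ∈ satIdeal S I := by
  rintro a ⟨s, hs, hsa⟩
  refine ⟨s * s, S.mul_mem hs hs, ?_⟩
  have key : s * s * δ a = s * δ (s * a) - δ s * (s * a) := by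
    rw [hδmul]; ring
  rw [key]
  exact I.sub_mem (I.mul_mem_left _ (hI _ hsa)) (I.mul_mem_left _ hsa)

lemma sat_mono (δ : R → R)
    (hδmul : ∀ a b : R, δ (a * b) = a * δ b + b * δ a)
    (S : Submonoid R) (F F' : Set R)
    (h : F ⊆ (satIdeal S (genIdeal δ F') : Set R)) :
    (satIdeal S (genIdeal δ F) : Set R) ⊆ (satIdeal S (genIdeal δ F')) := by
  have hsub : (genIdeal δ F : Set R) ⊆ (satIdeal S (genIdeal δ F') : Set R) := by
    intro x hx
    exact (mem_gen_iff δ F x).1 hx (satIdeal S (genIdeal δ F'))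
      (satIdeal_isRadical S _ (genIdeal_isRadical δ F'))
      (satIdeal_diff δ hδmul S _ (genIdeal_diff δ F')) h
  rintro a ⟨s, hs, hsa⟩
  obtain ⟨t, ht, hta⟩ := hsub hsa
  exact ⟨t * s, S.mul_mem ht hs, by rwa [mul_assoc]⟩

end Aux

/-- Let `R` be a commutative ring with a derivation `δ`, `S` a
submonoid of `R`, `B` and `G` subsets of `R`, and `r : G → R` a function such that
for every `g ∈ G` there is `h ∈ S` with `h·g − r(g)` in the (non-differential)
ideal of `R` generated by `B`. Then `{G ∪ B} : S^∞ = {r(G) ∪ B} : S^∞`, where `{F}`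
is the smallest radical differential ideal containing `F` and
`T : S^∞ = {a | s * a ∈ T for some s ∈ S}`. -/
theorem radDiffIdeal_saturation_remainder_eq
    {R : Type*} [CommRing R] (δ : R → R)
    (hδadd : ∀ a b : R, δ (a + b) = δ a + δ b)
    (hδmul : ∀ a b : R, δ (a * b) = a * δ b + b * δ a)
    (S : Submonoid R) (B G : Set R) (r : G → R)
    (hr : ∀ g : G, ∃ h ∈ S, h * (g : R) - r g ∈ Ideal.span B) :
    {a : R | ∃ s ∈ S, s * a ∈ radDiffIdealGen δ (G ∪ B)} =
      {a : R | ∃ s ∈ S, s * a ∈ radDiffIdealGen δ (Set.range r ∪ B)} := by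

  have hspan1 : Ideal.span B ≤ genIdeal δ (G ∪ B) :=
    Ideal.span_le.2 fun b hb => subset_genIdeal δ _ (Or.inr hb)
  have hspan2 : Ideal.span B ≤ genIdeal δ (Set.range r ∪ B) :=
    Ideal.span_le.2 fun b hb => subset_genIdeal δ _ (Or.inr hb)
  apply Set.Subset.antisymm
  · apply sat_mono δ hδmul
    rintro x (hx | hx)
    · obtain ⟨h, hhS, hmem⟩ := hr ⟨x, hx⟩
      refine ⟨h, hhS, ?_⟩
      have h1 : r ⟨x, hx⟩ ∈ genIdeal δ (Set.range r ∪ B) :=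
        subset_genIdeal δ _ (Or.inl ⟨⟨x, hx⟩, rfl⟩)
      have h2 : h * x - r ⟨x, hx⟩ ∈ genIdeal δ (Set.range r ∪ B) := hspan2 hmem
      have : h * x = (h * x - r ⟨x, hx⟩) + r ⟨x, hx⟩ := by ring
      rw [this]
      exact (genIdeal δ (Set.range r ∪ B)).add_mem h2 h1
    · exact ⟨1, S.one_mem, by rw [one_mul]; exact subset_genIdeal δ _ (Or.inr hx)⟩
  · apply sat_mono δ hδmul
    rintro x (⟨g, rfl⟩ | hx)
    · obtain ⟨h, hhS, hmem⟩ := hr g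
      refine ⟨1, S.one_mem, ?_⟩
      rw [one_mul]
      have h1 : h * (g : R) ∈ genIdeal δ (G ∪ B) :=
        (genIdeal δ (G ∪ B)).mul_mem_left h (subset_genIdeal δ _ (Or.inl g.2))
      have h2 : h * (g : R) - r g ∈ genIdeal δ (G ∪ B) := hspan1 hmem
      have : r g = h * (g : R) - (h * (g : R) - r g) := by ring
      rw [this]
      exact (genIdeal δ (G ∪ B)).sub_mem h1 h2
    · exact ⟨1, S.one_mem, by rw [one_mul]; exact subset_genIdeal δ _ (Or.inr hx)⟩
end
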